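/- Let α, β ∈ ℕ with α, β > 1 be multiplicatively independent, and let a, μ, δ be positive rationals. Set Δ = min{a/2, a·δ/(2μ)}. Then for every M ∈ ℕ there exist d ∈ ℕ with d > M and m ∈ ℕ with the following property: for all k ≥ m, if there exists ñ ∈ ℕ with |α^{ñ}/β^k − a| < Δ and ñ ≥ m, then there exists n̂ ∈ ℕ with |α^{n̂}/β^{k−d} − μ| < δ. -/

import Mathlib

open Real

/-- Small positive element of the form `m - q*x` with `q > 0`. -/
lemma sda_step1 (x : ℝ) (hx : Irrational x) (ε : ℝ) (hε : 0 < ε) :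
    ∃ (q : ℕ) (m : ℤ), 0 < q ∧ 0 < (m : ℝ) - q * x ∧ (m : ℝ) - q * x < ε := by
  set ε' : ℝ := min ε 1 with hε'
  have hε'0 : 0 < ε' := lt_min hε one_pos
  have hε'1 : ε' ≤ 1 := min_le_right _ _
  have hε'ε : ε' ≤ ε := min_le_left _ _
  obtain ⟨N, hN⟩ := exists_nat_gt (1 / ε')
  have hN' : 1 < (N : ℝ) * ε' := by rwa [div_lt_iff₀ hε'0] at hN
  have hN1 : 0 < N + 1 := Nat.succ_pos N
  obtain ⟨j, k, hk0, hkN, hjk⟩ := Real.exists_int_int_abs_mul_sub_le x hN1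
  set s : ℝ := (k : ℝ) * x - j with hs
  have hks : Irrational s :=
    ((irrational_intCast_mul_iff (m := k)).mpr ⟨by omega, hx⟩).sub_intCast j
  have hsne : s ≠ 0 := fun h => hks.ne_rat 0 (by simpa using h)
  have hsmall : |s| < ε' := by
    refine lt_of_le_of_lt hjk ?_
    rw [div_lt_iff₀ (by positivity)]
    push_cast
    nlinarith
  have hkt : (k.toNat : ℝ) = (k : ℝ) := by exact_mod_cast Int.toNat_of_nonneg hk0.le
  rcases lt_or_gt_of_ne hsne with hneg | hpos
  · refine ⟨k.toNat, j, by omega, ?_, ?_⟩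
    · rw [hkt]
      have := abs_of_neg hneg
      nlinarith [abs_nonneg s]
    · rw [hkt]
      have := abs_of_neg hneg
      nlinarith
  · -- s > 0 : wrap around
    have hslt : s < ε' := by rw [abs_of_pos hpos] at hsmall; exact hsmall
    have hs1 : s < 1 := lt_of_lt_of_le hslt hε'1
    have hinv1 : 1 < 1 / s := (one_lt_div hpos).mpr hs1
    set K' : ℤ := ⌈1 / s⌉ with hK'
    have hle : 1 / s ≤ K' := Int.le_ceil _
    have hne : 1 / s ≠ (K' : ℝ) := by
      intro h
      have hK'pos : (0:ℝ) < (K' : ℝ) := lt_trans (by linarith) (lt_of_lt_of_le hinv1 hle)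
      have hK'R : (K' : ℝ) ≠ 0 := hK'pos.ne'
      refine hks.ne_rat ((K' : ℚ))⁻¹ ?_
      have : s = ((K' : ℝ))⁻¹ := by
        field_simp at h ⊢
        linarith
      rw [this]
      push_cast
      rfl
    have hlt : 1 / s < K' := lt_of_le_of_ne hle hne
    have hgt : (K' : ℝ) - 1 < 1 / s := by
      have := Int.ceil_lt_add_one (1 / s)
      rw [← hK'] at this
      linarith
    have hK'2 : 2 ≤ K' := by
      have h1 : (1:ℝ) < (K' : ℝ) := lt_trans hinv1 hlt
      have : (1:ℤ) < K' := by exact_mod_cast h1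
      omega
    set K : ℕ := (K' - 1).toNat with hK
    have hKR : (K : ℝ) = (K' : ℝ) - 1 := by
      have h2 : ((K : ℕ) : ℤ) = K' - 1 := Int.toNat_of_nonneg (by omega)
      exact_mod_cast congrArg (Int.cast : ℤ → ℝ) h2
    have hKpos : 0 < K := by omega
    have hKs1 : (K:ℝ) * s < 1 := by
      have : (K:ℝ) < 1 / s := by rw [hKR]; linarith
      calc (K:ℝ) * s < (1/s) * s := by exact mul_lt_mul_of_pos_right this hpos
        _ = 1 := by field_simp
    have h1Ks : 1 < ((K:ℝ) + 1) * s := by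
      have hK1 : 1 / s < (K:ℝ) + 1 := by rw [hKR]; push_cast; linarith
      calc (1:ℝ) = (1/s) * s := by field_simp
        _ < ((K:ℝ) + 1) * s := mul_lt_mul_of_pos_right hK1 hpos
    have hval : (((K:ℤ) * j + 1 : ℤ) : ℝ) - ((K * k.toNat : ℕ) : ℝ) * x = 1 - K * s := by
      rw [hs]
      push_cast
      rw [hkt]
      ring
    refine ⟨K * k.toNat, (K:ℤ) * j + 1, Nat.mul_pos hKpos (by omega), ?_, ?_⟩
    · rw [hval]; linarith
    · rw [hval]; linarith

/-- Density of `{e - p x : e p ∈ ℕ}` for positive irrational `x`. -/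
lemma sda_step2 (x : ℝ) (hx : Irrational x) (hx0 : 0 < x) (t ε : ℝ) (hε : 0 < ε) :
    ∃ e p : ℕ, |(e : ℝ) - p * x - t| < ε := by
  obtain ⟨q, m, hq, hg1, hg2⟩ := sda_step1 x hx ε hε
  set g : ℝ := (m : ℝ) - q * x with hg
  have hqx : 0 < (q : ℝ) * x := by positivity
  have hm0 : (0:ℝ) < (m : ℝ) := by rw [hg] at hg1; nlinarith
  have hmZ : 0 ≤ m := by exact_mod_cast hm0.le
  obtain ⟨P, hP⟩ := exists_nat_ge ((-t) / x)
  have hy : 0 ≤ t + P * x := by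
    have : (-t) ≤ P * x := by rwa [div_le_iff₀ hx0] at hP
    linarith
  set y : ℝ := t + P * x with hyd
  set K : ℕ := (⌊y / g⌋).toNat with hKd
  have hKR : (K : ℝ) = (⌊y / g⌋ : ℤ) := by
    have : ((K : ℕ) : ℤ) = ⌊y / g⌋ := Int.toNat_of_nonneg (Int.floor_nonneg.mpr (by positivity))
    exact_mod_cast congrArg (Int.cast : ℤ → ℝ) this
  have hK1 : (K : ℝ) * g ≤ y := by
    rw [hKR]
    calc ((⌊y / g⌋ : ℤ) : ℝ) * g ≤ (y / g) * g := mul_le_mul_of_nonneg_right (Int.floor_le _) hg1.le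
      _ = y := by field_simp
  have hK2 : y < ((K : ℝ) + 1) * g := by
    rw [hKR]
    calc y = (y / g) * g := by field_simp
      _ < ((⌊y / g⌋ : ℤ) + 1 : ℝ) * g := mul_lt_mul_of_pos_right (Int.lt_floor_add_one _) hg1
  refine ⟨K * m.toNat, K * q + P, ?_⟩
  have hval : ((K * m.toNat : ℕ) : ℝ) - ((K * q + P : ℕ) : ℝ) * x - t = (K : ℝ) * g - y := by
    have hmt : (m.toNat : ℝ) = (m : ℝ) := by exact_mod_cast Int.toNat_of_nonneg hmZ
    rw [hg, hyd]
    push_cast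
    rw [hmt]
    ring
  rw [hval, abs_sub_comm, abs_of_nonneg (by linarith)]
  linarith

/-- Multiplicative independence gives irrationality of the ratio of logs. -/
lemma sda_irr (α β : ℕ) (hα : 1 < α) (hβ : 1 < β)
    (hind : ∀ n₁ n₂ : ℕ, α ^ n₁ = β ^ n₂ → n₁ = 0 ∧ n₂ = 0) :
    Irrational (Real.log α / Real.log β) := by
  have hlogα : 0 < Real.log α := Real.log_pos (by exact_mod_cast hα)
  have hlogβ : 0 < Real.log β := Real.log_pos (by exact_mod_cast hβ)
  rintro ⟨r, hr⟩
  have hr0 : 0 < r := by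
    have h0 : (0:ℝ) < (r : ℝ) := by rw [hr]; positivity
    exact_mod_cast h0
  have hnum : 0 < r.num := Rat.num_pos.mpr hr0
  have key : (r.den : ℝ) * Real.log α = (r.num : ℝ) * Real.log β := by
    have hden : (r.den : ℝ) ≠ 0 := by exact_mod_cast r.den_nz
    have hcast : (r : ℝ) = (r.num : ℝ) / (r.den : ℝ) := by rw [Rat.cast_def]
    rw [hcast] at hr
    field_simp at hr
    linarith [hr]
  have hlogs : Real.log ((α : ℝ) ^ r.den) = Real.log ((β : ℝ) ^ r.num.toNat) := by
    rw [Real.log_pow, Real.log_pow]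
    have : (r.num.toNat : ℝ) = (r.num : ℝ) := by exact_mod_cast Int.toNat_of_nonneg hnum.le
    rw [this]
    exact_mod_cast key
  have hαpos : (0:ℝ) < (α : ℝ) ^ r.den := by positivity
  have hβpos : (0:ℝ) < (β : ℝ) ^ r.num.toNat := by positivity
  have heq : (α : ℝ) ^ r.den = (β : ℝ) ^ r.num.toNat := by
    have := congrArg Real.exp hlogs
    rwa [Real.exp_log hαpos, Real.exp_log hβpos] at this
  have hnat : α ^ r.den = β ^ r.num.toNat := by exact_mod_cast heq
  exact r.den_nz (hind _ _ hnat).1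

/-- Rational approximation of any positive rational by `β^d / α^p` with `d` large. -/
lemma sda_step3 (α β : ℕ) (hα : 1 < α) (hβ : 1 < β)
    (hind : ∀ n₁ n₂ : ℕ, α ^ n₁ = β ^ n₂ → n₁ = 0 ∧ n₂ = 0)
    (c : ℚ) (hc : 0 < c) (ε : ℚ) (hε : 0 < ε) (M : ℕ) :
    ∃ d p : ℕ, M < d ∧ |(β : ℚ) ^ d / (α : ℚ) ^ p - c| < ε := by
  have hlogα : 0 < Real.log α := Real.log_pos (by exact_mod_cast hα)
  have hlogβ : 0 < Real.log β := Real.log_pos (by exact_mod_cast hβ)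
  set x : ℝ := Real.log α / Real.log β with hx
  have hxirr : Irrational x := sda_irr α β hα hβ hind
  have hx0 : 0 < x := by positivity
  have hcR : (0:ℝ) < (c : ℝ) := by exact_mod_cast hc
  have hεR : (0:ℝ) < (ε : ℝ) := by exact_mod_cast hε
  set ε₄ : ℝ := (ε : ℝ) / (c : ℝ) with hε₄
  have hε₄0 : 0 < ε₄ := by positivity
  set ε₃ : ℝ := min (1/2) (ε₄ / 2) with hε₃
  have hε₃0 : 0 < ε₃ := lt_min (by norm_num) (by positivity)
  have hε₃half : ε₃ ≤ 1/2 := min_le_left _ _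
  have hε₃4 : ε₃ ≤ ε₄ / 2 := min_le_right _ _
  set t : ℝ := Real.log c / Real.log β - (M + 1) with ht
  obtain ⟨e, p, hep⟩ := sda_step2 x hxirr hx0 t (ε₃ / Real.log β) (by positivity)
  set d : ℕ := M + 1 + e with hd
  have hkey : |(d : ℝ) * Real.log β - p * Real.log α - Real.log c| < ε₃ := by
    have hmul := mul_lt_mul_of_pos_right hep hlogβ
    rw [← abs_of_pos hlogβ, ← abs_mul] at hmul
    have heq : ((e : ℝ) - p * x - t) * Real.log β
        = (d : ℝ) * Real.log β - p * Real.log α - Real.log c := by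
      rw [hx, ht, hd]
      push_cast
      field_simp
      ring
    rw [heq] at hmul
    have : ε₃ / Real.log β * Real.log β = ε₃ := by field_simp
    rwa [abs_of_pos hlogβ, this] at hmul
  set R : ℝ := (β : ℝ) ^ d / ((α : ℝ) ^ p * (c : ℝ)) with hR
  have hαp : (0:ℝ) < (α : ℝ) ^ p := by positivity
  have hβd : (0:ℝ) < (β : ℝ) ^ d := by positivity
  have hRpos : 0 < R := by positivity
  have hlogR : Real.log R = (d : ℝ) * Real.log β - p * Real.log α - Real.log c := by
    rw [hR, Real.log_div hβd.ne' (by positivity), Real.log_mul hαp.ne' hcR.ne',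
      Real.log_pow, Real.log_pow]
    push_cast
    ring
  rw [← hlogR] at hkey
  rw [abs_lt] at hkey
  -- lower bound : R > 1 - ε₃
  have hlow : 1 - ε₃ < R := by
    have := Real.log_le_sub_one_of_pos hRpos
    linarith [hkey.1]
  -- upper bound : R < 1 + 2 ε₃
  have hupinv : 1 - ε₃ < R⁻¹ := by
    have h1 := Real.log_le_sub_one_of_pos (inv_pos.mpr hRpos)
    rw [Real.log_inv] at h1
    linarith [hkey.2]
  have hup : R < 1 + 2 * ε₃ := by
    have h2 : R * (1 - ε₃) < 1 := by
      have := mul_lt_mul_of_pos_left hupinv hRpos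
      rwa [mul_inv_cancel₀ hRpos.ne'] at this
    nlinarith [mul_nonneg hε₃0.le (by linarith : (0:ℝ) ≤ 1 - 2 * ε₃)]
  -- transfer to the rational statement
  have hRval : (β : ℝ) ^ d / (α : ℝ) ^ p = R * (c : ℝ) := by
    rw [hR]; field_simp
  have hreal : |(β : ℝ) ^ d / (α : ℝ) ^ p - (c : ℝ)| < (ε : ℝ) := by
    rw [hRval]
    have : R * (c : ℝ) - (c : ℝ) = (c : ℝ) * (R - 1) := by ring
    rw [this, abs_mul, abs_of_pos hcR]
    have habs : |R - 1| < ε₄ := by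
      rw [abs_lt]
      constructor <;> [linarith; linarith]
    calc (c : ℝ) * |R - 1| < (c : ℝ) * ε₄ := by
          exact mul_lt_mul_of_pos_left habs hcR
      _ = (ε : ℝ) := by rw [hε₄]; field_simp
  refine ⟨d, p, by omega, ?_⟩
  have hcast : ((|(β : ℚ) ^ d / (α : ℚ) ^ p - c| : ℚ) : ℝ)
      = |(β : ℝ) ^ d / (α : ℝ) ^ p - (c : ℝ)| := by
    push_cast
    rfl
  rw [← Rat.cast_lt (K := ℝ), hcast]
  exact hreal

/-- Let `α, β > 1` be multiplicatively independent and `a, μ, δ` positive rationals; set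
`Δ = min(a/2, a·δ/(2μ))`. For every `M ∈ ℕ` there exist `d > M` and `m ∈ ℕ` such that for all
`k ≥ m` (with `k ≥ d`, so that `k − d ∈ ℕ`): if `|α^{ñ}/β^k − a| < Δ` for some `ñ ≥ m`, then
`|α^{n̂}/β^{k−d} − μ| < δ` for some `n̂ ∈ ℕ`. -/
theorem simultaneous_diophantine_approx (α β : ℕ) (hα : 1 < α) (hβ : 1 < β)
    (hind : ∀ n₁ n₂ : ℕ, α ^ n₁ = β ^ n₂ → n₁ = 0 ∧ n₂ = 0)
    (a μ δ : ℚ) (ha : 0 < a) (hμ : 0 < μ) (hδ : 0 < δ)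
    (Δ : ℚ) (hΔ : Δ = min (a / 2) (a * δ / (2 * μ))) :
    ∀ M : ℕ, ∃ d m : ℕ, M < d ∧
      ∀ k : ℕ, m ≤ k → d ≤ k →
        (∃ ntil : ℕ, m ≤ ntil ∧ |(α : ℚ) ^ ntil / (β : ℚ) ^ k - a| < Δ) →
        ∃ nhat : ℕ, |(α : ℚ) ^ nhat / (β : ℚ) ^ (k - d) - μ| < δ := by
  intro M
  have hΔ0 : 0 < Δ := by rw [hΔ]; exact lt_min (by positivity) (by positivity)
  have hΔa : Δ ≤ a * δ / (2 * μ) := hΔ ▸ min_le_right _ _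
  set ε : ℚ := δ / (2 * (Δ + a)) with hεd
  have hε0 : 0 < ε := by positivity
  obtain ⟨d, p, hMd, happ⟩ := sda_step3 α β hα hβ hind (μ / a) (by positivity) ε hε0 M
  refine ⟨d, p, hMd, ?_⟩
  rintro k hmk hdk ⟨ntil, hpn, hr⟩
  refine ⟨ntil - p, ?_⟩
  have hA0 : (0:ℚ) < (α : ℚ) := by exact_mod_cast (by omega : 0 < α)
  have hB0 : (0:ℚ) < (β : ℚ) := by exact_mod_cast (by omega : 0 < β)
  set r : ℚ := (α : ℚ) ^ ntil / (β : ℚ) ^ k with hrd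
  set C : ℚ := (β : ℚ) ^ d / (α : ℚ) ^ p with hCd
  have hCpos : 0 < C := by rw [hCd]; positivity
  have hval : (α : ℚ) ^ (ntil - p) / (β : ℚ) ^ (k - d) = r * C := by
    have h1 : (α : ℚ) ^ (ntil - p) * (α : ℚ) ^ p = (α : ℚ) ^ ntil :=
      pow_sub_mul_pow _ hpn
    have h2 : (β : ℚ) ^ (k - d) * (β : ℚ) ^ d = (β : ℚ) ^ k :=
      pow_sub_mul_pow _ hdk
    have h3 : r * C = ((α : ℚ) ^ ntil * (β : ℚ) ^ d) / ((β : ℚ) ^ k * (α : ℚ) ^ p) := by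
      rw [hrd, hCd, div_mul_div_comm]
    rw [h3, ← h1, ← h2, div_eq_div_iff (by positivity) (by positivity)]
    ring
  rw [hval]
  rw [abs_lt] at hr happ ⊢
  have haμ : a * (μ / a) = μ := by field_simp
  have hsum : ε * (Δ + a) = δ / 2 := by
    rw [hεd]; field_simp
  have hμΔ : (μ / a) * Δ ≤ δ / 2 := by
    have h1 : Δ * (2 * μ) ≤ a * δ := by rwa [le_div_iff₀ (by positivity)] at hΔa
    have h2 : (μ / a) * Δ = (Δ * (2 * μ)) / (2 * a) := by field_simp
    rw [h2, div_le_iff₀ (by positivity)]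
    nlinarith
  have hu : C * (r - a) < C * Δ := mul_lt_mul_of_pos_left hr.2 hCpos
  have hl : C * (-Δ) < C * (r - a) := mul_lt_mul_of_pos_left hr.1 hCpos
  have hnn : 0 ≤ (μ / a + ε - C) * Δ := mul_nonneg (by linarith [happ.2]) hΔ0.le
  have hCΔ : C * Δ ≤ (μ / a) * Δ + ε * Δ := by nlinarith [hnn]
  have hid : r * C - μ = C * (r - a) + a * (C - μ / a) := by
    field_simp
    ring
  have hsum' : ε * Δ + ε * a = δ / 2 := by rw [← hsum]; ring
  have hua : a * (C - μ / a) < a * ε := mul_lt_mul_of_pos_left happ.2 ha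
  have hla : a * (-ε) < a * (C - μ / a) := mul_lt_mul_of_pos_left happ.1 ha
  constructor
  · linarith [hl, hla, hCΔ, hμΔ, hsum', hid]
  · linarith [hu, hua, hCΔ, hμΔ, hsum', hid]
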